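/- arXiv:1012.4698 — 6 statements merged into one kernel-verified Lean document; each statement's English description precedes it below -/
import Mathlib

section
/- Let A and B be unital rings that are Morita equivalent. Then there exist n ≥ 1 and an idempotent matrix e ∈ Mₙ(A) (e·e = e) such that the two-sided ideal of A generated by the entries of e is all of A and such that B is isomorphic as a ring to the corner ring e·Mₙ(A)·e. -/
/-!
Morita equivalences are additive and carry generators to generators. Since `A` generates
`Mod-A`, `Q = F⁻¹(A)` generates `Mod-B`, so `1` lies in the trace ideal of `Q` and `B` is a
direct summand of some `Qⁿ`. Applying `F`, `P = F(B)` is a direct summand of `F(Qⁿ) ≅ Aⁿ`, cut out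
by an idempotent `e ∈ Mₙ(A)`, whence `B ≅ End(B_B) ≅ End(P) ≅ e Mₙ(A) e`. Finally `P` is itself
a generator, so its trace ideal is `A`; but every value of a functional on `P ≅ eAⁿ` lies in the
ideal generated by the entries of `e`.
-/

section Corner

variable {R : Type*} [Ring R]

theorem corner_absorb_left {e x : R} (he : e * e = e) (hx : e * x * e = x) :
    e * x = x := by
  conv_lhs => rw [← hx]
  simp only [← mul_assoc, he]
  exact hx

theorem corner_absorb_right {e x : R} (he : e * e = e) (hx : e * x * e = x) :
    x * e = x := by
  conv_lhs => rw [← hx]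
  simp only [mul_assoc, he]
  rw [← mul_assoc]
  exact hx

def cornerRing {e : R} (he : e * e = e) : Ring {x : R // e * x * e = x} where
  add x y := ⟨x.1 + y.1, by rw [mul_add, add_mul, x.2, y.2]⟩
  zero := ⟨0, by simp⟩
  neg x := ⟨-x.1, by simp [x.2]⟩
  mul x y := ⟨x.1 * y.1, by
    have hx := corner_absorb_left he x.2
    have hy := corner_absorb_right he y.2
    calc e * (x.1 * y.1) * e = (e * x.1) * (y.1 * e) := by
          simp only [mul_assoc]
      _ = x.1 * y.1 := by rw [hx, hy]⟩
  one := ⟨e, by rw [he, he]⟩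
  add_assoc a b c := Subtype.ext (add_assoc a.1 b.1 c.1)
  zero_add a := Subtype.ext (zero_add a.1)
  add_zero a := Subtype.ext (add_zero a.1)
  add_comm a b := Subtype.ext (add_comm a.1 b.1)
  neg_add_cancel a := Subtype.ext (neg_add_cancel a.1)
  left_distrib a b c := Subtype.ext (left_distrib a.1 b.1 c.1)
  right_distrib a b c := Subtype.ext (right_distrib a.1 b.1 c.1)
  zero_mul a := Subtype.ext (zero_mul a.1)
  mul_zero a := Subtype.ext (mul_zero a.1)
  mul_assoc a b c := Subtype.ext (mul_assoc a.1 b.1 c.1)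
  one_mul a := Subtype.ext (corner_absorb_left he a.2)
  mul_one a := Subtype.ext (corner_absorb_right he a.2)
  nsmul n x := ⟨n • x.1, by rw [mul_smul_comm, smul_mul_assoc, x.2]⟩
  nsmul_zero x := Subtype.ext (zero_nsmul x.1)
  nsmul_succ n x := Subtype.ext (succ_nsmul x.1 n)
  zsmul n x := ⟨n • x.1, by rw [mul_smul_comm, smul_mul_assoc, x.2]⟩
  zsmul_zero' x := Subtype.ext (zero_zsmul x.1)
  zsmul_succ' n x := Subtype.ext (by push_cast; exact add_one_zsmul x.1 (n : ℤ))
  zsmul_neg' n x := Subtype.ext (by change _ • x.1 = -(_ • x.1); simp [negSucc_zsmul]; noncomm_ring)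

end Corner

universe u

open CategoryTheory MulOpposite

def RingEquiv.cornerCongr {R S : Type*} [Ring R] [Ring S] (φ : R ≃+* S) {e : R} (he : e * e = e) :
    letI := cornerRing he
    letI := cornerRing (IsIdempotentElem.map he φ)
    {x : R // e * x * e = x} ≃+* {y : S // φ e * y * φ e = y} :=
  letI := cornerRing he
  letI := cornerRing (IsIdempotentElem.map he φ)
  { toFun x := ⟨φ x.1, by rw [← map_mul, ← map_mul, x.2]⟩
    invFun y := ⟨φ.symm y, by rw [← φ.injective.eq_iff]; simpa using y.2⟩
    left_inv x := Subtype.ext (φ.symm_apply_apply x)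
    right_inv y := Subtype.ext (φ.apply_symm_apply y)
    map_mul' x y := Subtype.ext (map_mul φ x.1 y.1)
    map_add' x y := Subtype.ext (map_add φ x.1 y.1) }

namespace CategoryTheory.Retract

variable {C : Type*} [Category C] {X Y : C} (h : Retract X Y)

def idempotent : End Y := h.r ≫ h.i

lemma isIdempotentElem_idempotent : IsIdempotentElem h.idempotent := by
  simp [IsIdempotentElem, idempotent, End.mul_def]

variable [Preadditive C]

def endRingEquivCorner :
    letI := cornerRing h.isIdempotentElem_idempotent
    End X ≃+* {f : End Y // h.idempotent * f * h.idempotent = f} :=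
  letI := cornerRing h.isIdempotentElem_idempotent
  { toFun f := ⟨h.r ≫ f ≫ h.i, by simp [idempotent, End.mul_def]⟩
    invFun f := h.i ≫ f.1 ≫ h.r
    left_inv f := by simp
    right_inv f := Subtype.ext <| by
      conv_rhs => rw [← f.2]
      simp [idempotent, End.mul_def]
    map_mul' f g := Subtype.ext <| by
      change _ = (h.r ≫ g ≫ h.i) ≫ h.r ≫ f ≫ h.i
      simp [End.mul_def]
    map_add' f g := Subtype.ext <| by
      change h.r ≫ ((f : X ⟶ X) + g) ≫ h.i = h.r ≫ f ≫ h.i + h.r ≫ g ≫ h.i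
      rw [Preadditive.add_comp, Preadditive.comp_add] }

end CategoryTheory.Retract

noncomputable def CategoryTheory.Functor.FullyFaithful.ringEquivEnd {C D : Type*} [Category C]
    [Category D] [Preadditive C] [Preadditive D] {F : C ⥤ D} [F.Additive] (hF : F.FullyFaithful)
    (X : C) : End X ≃+* End (F.obj X) :=
  { hF.mulEquivEnd X with map_add' := fun _ _ => F.map_add }

noncomputable def CategoryTheory.Functor.mapPiIso {R S : Type u} [Ring R] [Ring S]
    (G : ModuleCat.{u} S ⥤ ModuleCat.{u} R) [G.Additive] (ι : Type) [Finite ι]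
    (M : ModuleCat.{u} S) : G.obj (ModuleCat.of S (ι → M)) ≅ ModuleCat.of R (ι → G.obj M) :=
  G.mapIso (ModuleCat.biproductIsoPi fun _ : ι => M).symm ≪≫ G.mapBiproduct _ ≪≫
    ModuleCat.biproductIsoPi _

namespace ModuleCat

variable (R : Type u) [Ring R]

def ringEquivEndSelfOp : R ≃+* End (of Rᵐᵒᵖ Rᵐᵒᵖ) :=
  (RingEquiv.opOp R).trans <|
    (RingEquiv.moduleEndSelf Rᵐᵒᵖ).trans (endRingEquiv (of Rᵐᵒᵖ Rᵐᵒᵖ)).symm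

def endPiRingEquivMatrix (ι : Type) [Fintype ι] [DecidableEq ι] :
    End (of Rᵐᵒᵖ (ι → Rᵐᵒᵖ)) ≃+* Matrix ι ι R :=
  (endRingEquiv _).trans <| (endVecRingEquivMatrixEnd ι Rᵐᵒᵖ Rᵐᵒᵖ).trans <|
    RingEquiv.mapMatrix ((RingEquiv.moduleEndSelf Rᵐᵒᵖ).symm.trans (RingEquiv.opOp R).symm)

variable {R}

@[simp]
lemma endPiRingEquivMatrix_apply {ι : Type} [Fintype ι] [DecidableEq ι]
    (f : End (of Rᵐᵒᵖ (ι → Rᵐᵒᵖ))) (i j : ι) :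
    endPiRingEquivMatrix R ι f i j = (f.hom (Pi.single j 1) i).unop :=
  rfl

lemma isSeparator_self : IsSeparator (of R R) := by
  refine (isSeparator_def _).2 fun M N f g hfg => ?_
  ext x
  simpa using congr(($(hfg (ofHom (LinearMap.toSpanSingleton R M x))).hom 1))

lemma span_apply_eq_top_of_isSeparator {G : ModuleCat.{u} R} (hG : IsSeparator G) :
    Submodule.span R {x : R | ∃ (f : G →ₗ[R] R) (g : G), f g = x} = ⊤ := by
  set τ := Submodule.span R {x : R | ∃ (f : G →ₗ[R] R) (g : G), f g = x}
  have hmkQ : ofHom τ.mkQ = (0 : of R R ⟶ of R (R ⧸ τ)) :=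
    (isSeparator_def _).1 hG _ _ fun f => by
      ext g
      simpa [Submodule.Quotient.mk_eq_zero] using
        Submodule.subset_span (s := {x : R | ∃ (f : G →ₗ[R] R) (g : G), f g = x}) ⟨f.hom, g, rfl⟩
  simpa using congr(LinearMap.ker $(hmkQ).hom)

lemma exists_retract_pi_of_isSeparator {G : ModuleCat.{u} R} (hG : IsSeparator G) :
    ∃ n : ℕ, Nonempty (Retract (of R R) (of R (Fin (n + 1) → G))) := by
  have hone : (1 : R) ∈ Submodule.span R {x : R | ∃ (f : G →ₗ[R] R) (g : G), f g = x} :=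
    span_apply_eq_top_of_isSeparator hG ▸ Submodule.mem_top
  obtain ⟨n, c, v, hsum⟩ := Submodule.mem_span_set'.1 hone
  choose f g hfg using fun k => (v k).2
  let f' : Fin (n + 1) → G →ₗ[R] R := Fin.cons 0 f
  let g' : Fin (n + 1) → G := Fin.cons 0 fun k => c k • g k
  have hsum' : ∑ k, f' k (g' k) = 1 := by
    simpa [f', g', Fin.sum_univ_succ, hfg] using hsum
  refine ⟨n, ⟨ofHom (LinearMap.toSpanSingleton R _ g'),
    ofHom (∑ k, f' k ∘ₗ LinearMap.proj k), ?_⟩⟩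
  ext
  simpa using hsum'

lemma exists_retract_pi_of_equivalence {S : Type u} [Ring S]
    (F : ModuleCat.{u} S ≌ ModuleCat.{u} R) :
    ∃ n : ℕ, Nonempty (Retract (F.functor.obj (of S S)) (of R (Fin (n + 1) → R))) := by
  have := F.functor.additive_of_preserves_binary_products
  obtain ⟨n, ⟨h⟩⟩ := exists_retract_pi_of_isSeparator (isSeparator_self.of_equivalence F.symm)
  refine ⟨n, ⟨(h.map F.functor).trans (Iso.retract ?_)⟩⟩
  exact F.functor.mapPiIso _ _ ≪≫ (LinearEquiv.piCongrRight fun _ =>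
    (F.counitIso.app (of R R)).toLinearEquiv).toModuleIso

lemma unop_apply_mem_of_forall_unop_apply_single_mem {ι : Type*} [Fintype ι] [DecidableEq ι]
    {ε : Module.End Rᵐᵒᵖ (ι → Rᵐᵒᵖ)} {I : TwoSidedIdeal R}
    (hε : ∀ i j, (ε (Pi.single j 1) i).unop ∈ I) (g : (ι → Rᵐᵒᵖ) →ₗ[Rᵐᵒᵖ] Rᵐᵒᵖ)
    (v : ι → Rᵐᵒᵖ) : (g (ε v)).unop ∈ I := by
  have expand (f : (ι → Rᵐᵒᵖ) →ₗ[Rᵐᵒᵖ] Rᵐᵒᵖ) (w : ι → Rᵐᵒᵖ) :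
      (f w).unop = ∑ j, (f (Pi.single j 1)).unop * (w j).unop := by
    conv_lhs => rw [pi_eq_sum_univ' w]
    simp
  have hεv (i : ι) : (ε v i).unop ∈ I := by
    rw [show ε v i = (LinearMap.proj i ∘ₗ ε) v from rfl, expand]
    exact sum_mem fun j _ => I.mul_mem_right _ _ (hε i j)
  rw [expand]
  exact sum_mem fun i _ => I.mul_mem_left _ _ (hεv i)

lemma eq_top_of_forall_endPiRingEquivMatrix_mem {ι : Type} [Fintype ι] [DecidableEq ι]
    {P : ModuleCat.{u} Rᵐᵒᵖ} (hP : IsSeparator P) (h : Retract P (of Rᵐᵒᵖ (ι → Rᵐᵒᵖ)))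
    {I : TwoSidedIdeal R} (hI : ∀ i j, endPiRingEquivMatrix R ι h.idempotent i j ∈ I) :
    I = ⊤ := by
  rw [← I.one_mem_iff, ← unop_one, ← TwoSidedIdeal.mem_asIdealOpposite]
  refine Submodule.span_le.2 ?_ (span_apply_eq_top_of_isSeparator hP ▸ Submodule.mem_top)
  rintro _ ⟨f, p, rfl⟩
  have hri (q : P) : h.r.hom (h.i.hom q) = q :=
    LinearMap.congr_fun (congrArg Hom.hom h.retract) q
  have hp : p = h.r.hom (h.idempotent.hom (h.i.hom p)) := by
    simp [Retract.idempotent, hri]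
  rw [SetLike.mem_coe, TwoSidedIdeal.mem_asIdealOpposite, hp]
  exact unop_apply_mem_of_forall_unop_apply_single_mem
    (fun i j => by simpa only [endPiRingEquivMatrix_apply] using hI i j) (f ∘ₗ h.r.hom) _

end ModuleCat

open ModuleCat in
theorem exists_full_idempotent_matrix_of_morita_equivalent_general (A B : Type u) [Ring A] [Ring B]
    (F : ModuleCat.{u} Bᵐᵒᵖ ≌ ModuleCat.{u} Aᵐᵒᵖ) :
    ∃ (n : ℕ), 1 ≤ n ∧ ∃ (e : Matrix (Fin n) (Fin n) A) (he : e * e = e),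
      TwoSidedIdeal.span {a : A | ∃ i j, e i j = a} = ⊤ ∧
      (letI : Ring {x : Matrix (Fin n) (Fin n) A // e * x * e = x} := cornerRing he
       Nonempty (B ≃+* {x : Matrix (Fin n) (Fin n) A // e * x * e = x})) := by
  have := F.functor.additive_of_preserves_binary_products
  obtain ⟨n, ⟨h⟩⟩ := exists_retract_pi_of_equivalence F
  let φ := endPiRingEquivMatrix A (Fin (n + 1))
  have he : IsIdempotentElem (φ h.idempotent) := h.isIdempotentElem_idempotent.map φ
  refine ⟨n + 1, Nat.le_add_left 1 n, φ h.idempotent, he, ?_, ?_⟩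
  · exact eq_top_of_forall_endPiRingEquivMatrix_mem (isSeparator_self.of_equivalence F) h
      fun i j => TwoSidedIdeal.subset_span ⟨i, j, rfl⟩
  · let := cornerRing h.isIdempotentElem_idempotent
    let := cornerRing he
    exact ⟨(ringEquivEndSelfOp B).trans <| (F.fullyFaithfulFunctor.ringEquivEnd _).trans <|
      h.endRingEquivCorner.trans (φ.cornerCongr h.isIdempotentElem_idempotent)⟩

/-- If two unital rings `A` and `B` are Morita equivalent (their
categories of right modules are equivalent via an additive equivalence), then there are
`n ≥ 1` and an idempotent matrix `e ∈ Mₙ(A)` whose entries generate `A` as a two-sided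
ideal, such that `B` is isomorphic as a ring to the corner ring `e Mₙ(A) e`. -/
theorem exists_full_idempotent_matrix_of_morita_equivalent (A B : Type u) [Ring A] [Ring B]
    (F : ModuleCat.{u} Bᵐᵒᵖ ≌ ModuleCat.{u} Aᵐᵒᵖ) [F.functor.Additive] :
    ∃ (n : ℕ), 1 ≤ n ∧ ∃ (e : Matrix (Fin n) (Fin n) A) (he : e * e = e),
      TwoSidedIdeal.span {a : A | ∃ i j, e i j = a} = ⊤ ∧
      (letI : Ring {x : Matrix (Fin n) (Fin n) A // e * x * e = x} := cornerRing he
       Nonempty (B ≃+* {x : Matrix (Fin n) (Fin n) A // e * x * e = x})) :=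
  exists_full_idempotent_matrix_of_morita_equivalent_general A B F
end

section
/- Let A and B be unital rings and let F : Mod-B → Mod-A be an additive equivalence between the categories of right B-modules and right A-modules. Then E := F(B), the image of the right regular module B, is a finitely generated projective right A-module. -/
/-!
Both properties are categorical. Projectivity of a module is projectivity of the object of
`ModuleCat`, which equivalences preserve. A module is finitely generated iff `⊤` is a compact
element of its lattice of submodules, and that lattice is the lattice of subobjects, which an
equivalence carries isomorphically onto that of the image; so `F(B)` is finitely generated
because `B` is.
-/

universe u

open CategoryTheory

theorem IsCompactElement.map_orderIso {α β : Type*} [CompleteLattice α] [CompleteLattice β]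
    (e : α ≃o β) {a : α} (ha : IsCompactElement a) : IsCompactElement (e a) := by
  rw [CompleteLattice.isCompactElement_iff_le_of_directed_sSup_le] at ha ⊢
  intro s hne hdir hle
  have hdir' : DirectedOn (· ≤ ·) (e.symm '' s) :=
    hdir.mono_comp fun _ _ h => e.symm.monotone h
  obtain ⟨_, ⟨x, hx, rfl⟩, hax⟩ := ha _ (hne.image e.symm) hdir'
    (by rw [← map_sSup]; exact e.le_symm_apply.mpr hle)
  exact ⟨x, hx, e.le_symm_apply.mp hax⟩

theorem OrderIso.isCompactElement_iff {α β : Type*} [CompleteLattice α] [CompleteLattice β]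
    (e : α ≃o β) {a : α} : IsCompactElement (e a) ↔ IsCompactElement a :=
  ⟨fun h => by simpa using h.map_orderIso e.symm, (·.map_orderIso e)⟩

namespace CategoryTheory.Equivalence

variable {R S : Type u} [Ring R] [Ring S] (F : ModuleCat.{u} R ≌ ModuleCat.{u} S)

noncomputable def submoduleOrderIso (M : ModuleCat.{u} R) :
    Submodule R M ≃o Submodule S (F.functor.obj M) :=
  (ModuleCat.subobjectModule M).symm.trans
    ((Subobject.lowerEquivalence (MonoOver.congr M F)).toOrderIso.trans
      (ModuleCat.subobjectModule _))

theorem finite_functor_obj_iff (M : ModuleCat.{u} R) :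
    Module.Finite S (F.functor.obj M) ↔ Module.Finite R M := by
  simp only [Module.finite_def, Submodule.fg_iff_compact, ← (F.submoduleOrderIso M).map_top,
    OrderIso.isCompactElement_iff]

theorem projective_functor_obj_iff (M : Type u) [AddCommGroup M] [Module R M] :
    Module.Projective S (F.functor.obj (ModuleCat.of R M)) ↔ Module.Projective R M := by
  rw [IsProjective.iff_projective, IsProjective.iff_projective]
  exact F.map_projective_iff _

end CategoryTheory.Equivalence

theorem finite_projective_of_additive_equivalence_general (A B : Type u) [Ring A] [Ring B]
    (F : ModuleCat.{u} Bᵐᵒᵖ ≌ ModuleCat.{u} Aᵐᵒᵖ) :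
    Module.Finite Aᵐᵒᵖ (F.functor.obj (ModuleCat.of Bᵐᵒᵖ Bᵐᵒᵖ)) ∧
    Module.Projective Aᵐᵒᵖ (F.functor.obj (ModuleCat.of Bᵐᵒᵖ Bᵐᵒᵖ)) :=
  ⟨(F.finite_functor_obj_iff _).mpr (Module.Finite.self Bᵐᵒᵖ),
    (F.projective_functor_obj_iff Bᵐᵒᵖ).mpr inferInstance⟩

/-- If `F : Mod-B → Mod-A` is an additive equivalence between the
categories of right `B`-modules and right `A`-modules (realized as left modules over the
opposite rings), then `E := F(B)`, the image of the right regular module, is a finitely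
generated projective right `A`-module. -/
theorem finite_projective_of_additive_equivalence (A B : Type u) [Ring A] [Ring B]
    (F : ModuleCat.{u} Bᵐᵒᵖ ≌ ModuleCat.{u} Aᵐᵒᵖ) [F.functor.Additive] :
    Module.Finite Aᵐᵒᵖ (F.functor.obj (ModuleCat.of Bᵐᵒᵖ Bᵐᵒᵖ)) ∧
    Module.Projective Aᵐᵒᵖ (F.functor.obj (ModuleCat.of Bᵐᵒᵖ Bᵐᵒᵖ)) :=
  finite_projective_of_additive_equivalence_general A B F
end

section
/- Let A and B be unital rings and let F : Mod-B → Mod-A be an additive equivalence between the categories of right B-modules and right A-modules, and set E := F(B). Then the map sending b ∈ B to F(λ_b), where λ_b : B → B is left multiplication by b (a right B-module endomorphism of the regular module), is a ring isomorphism from B onto End_A(E), the endomorphism ring of the right A-module E. -/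
universe u

variable {B : Type u} [Ring B]

/-- Left multiplication `λ_b : x ↦ b * x` as an endomorphism of the right regular
`B`-module (a left module over `Bᵐᵒᵖ`). -/
def leftMulHom (b : B) : B →ₗ[Bᵐᵒᵖ] B where
  toFun x := b * x
  map_add' := mul_add b
  map_smul' c x := by
    simp only [MulOpposite.smul_eq_mul_unop, RingHom.id_apply, mul_assoc]

/-!
Left multiplication identifies `B` with the endomorphism ring of the regular module `B_B`, and a
fully faithful additive functor induces a ring isomorphism between endomorphism rings; compose.
-/

open CategoryTheory

namespace CategoryTheory.Functor.FullyFaithful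

variable {C D : Type*} [Category C] [Category D] [Preadditive C] [Preadditive D]
  {F : C ⥤ D} [F.Additive]

noncomputable def ringEquivEnd_s3 (hF : F.FullyFaithful) (X : C) : End X ≃+* End (F.obj X) where
  __ := hF.mulEquivEnd X
  map_add' _ _ := F.map_add

end CategoryTheory.Functor.FullyFaithful

/-- If `F : Mod-B → Mod-A` is an additive equivalence and `E := F(B)`,
then `b ↦ F(λ_b)` is a ring isomorphism from `B` onto `End_A(E)`. -/
theorem ringEquiv_end_of_additive_equivalence (A : Type u) [Ring A]
    (F : ModuleCat.{u} Bᵐᵒᵖ ≌ ModuleCat.{u} Aᵐᵒᵖ) [F.functor.Additive] :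
    ∃ Φ : B ≃+* Module.End Aᵐᵒᵖ (F.functor.obj (ModuleCat.of Bᵐᵒᵖ B)),
      ∀ b : B, (Φ b : Module.End Aᵐᵒᵖ (F.functor.obj (ModuleCat.of Bᵐᵒᵖ B))) =
        (F.functor.map (ModuleCat.ofHom (leftMulHom b))).hom := by
  let R := ModuleCat.of Bᵐᵒᵖ B
  refine ⟨(RingEquiv.moduleEndSelfOp B).trans <| (ModuleCat.endRingEquiv R).symm.trans <|
    (F.fullyFaithfulFunctor.ringEquivEnd_s3 R).trans (ModuleCat.endRingEquiv _), fun _ => rfl⟩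
end

section
/- Let k be a commutative ring, A a commutative unital k-algebra, and (C_r)_{r≥0} a formal associative deformation of A. Define {a, b} := C₁(a, b) − C₁(b, a). Then {·,·} is a Poisson bracket on A: it is k-bilinear and antisymmetric, it satisfies the Leibniz rule {a, b·c} = {a, b}·c + b·{a, c} for all a, b, c ∈ A, and it satisfies the Jacobi identity {a, {b, c}} + {b, {c, a}} + {c, {a, b}} = 0 for all a, b, c ∈ A. -/
open Finset

/-- Let `k` be a commutative ring, `A` a commutative unital `k`-algebra
and `(C_r)` a formal associative deformation of `A` (given by `k`-bilinear maps with
`C₀(a,b) = a·b` and order-by-order associativity).  Then the bracket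
`{a, b} := C₁(a,b) − C₁(b,a)` is a Poisson bracket: it is `k`-bilinear, antisymmetric,
satisfies the Leibniz rule and the Jacobi identity. -/
theorem poisson_bracket_of_formal_deformation
    {k : Type*} [CommRing k] {A : Type*} [CommRing A] [Algebra k A]
    (C : ℕ → A →ₗ[k] A →ₗ[k] A)
    (hC0 : ∀ a b : A, C 0 a b = a * b)
    (hassoc : ∀ (n : ℕ) (a b c : A),
      ∑ p ∈ antidiagonal n, C p.1 (C p.2 a b) c =
      ∑ p ∈ antidiagonal n, C p.1 a (C p.2 b c)) :
    let β : A → A → A := fun a b => C 1 a b - C 1 b a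
    (∀ (r : k) (a b : A), β (r • a) b = r • β a b) ∧
    (∀ (r : k) (a b : A), β a (r • b) = r • β a b) ∧
    (∀ a a' b : A, β (a + a') b = β a b + β a' b) ∧
    (∀ a b b' : A, β a (b + b') = β a b + β a b') ∧
    (∀ a b : A, β a b = - β b a) ∧
    (∀ a b c : A, β a (b * c) = β a b * c + b * β a c) ∧
    (∀ a b c : A, β a (β b c) + β b (β c a) + β c (β a b) = 0) := by
  have e1 : ∀ a b c : A, C 1 a b * c + C 1 (a * b) c = a * C 1 b c + C 1 a (b * c) := by
    intro a b c
    have h := hassoc 1 a b c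
    simp [Finset.Nat.sum_antidiagonal_eq_sum_range_succ_mk, Finset.sum_range_succ, hC0] at h
    exact h
  have e2 : ∀ a b c : A, C 2 a b * c + C 1 (C 1 a b) c + C 2 (a * b) c =
      a * C 2 b c + C 1 a (C 1 b c) + C 2 a (b * c) := by
    intro a b c
    have h := hassoc 2 a b c
    simp [Finset.Nat.sum_antidiagonal_eq_sum_range_succ_mk, Finset.sum_range_succ, hC0] at h
    linear_combination h
  intro β
  refine ⟨?_, ?_, ?_, ?_, ?_, ?_, ?_⟩
  · intro r a b; simp [β, smul_sub]
  · intro r a b; simp [β, smul_sub]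
  · intro a a' b; simp only [β, map_add, LinearMap.add_apply]; ring
  · intro a b b'; simp only [β, map_add, LinearMap.add_apply]; ring
  · intro a b; simp only [β]; ring
  · intro a b c
    have hx : C 1 (a * b) c = C 1 (b * a) c := by rw [mul_comm]
    have hy : C 1 b (c * a) = C 1 b (a * c) := by rw [mul_comm]
    simp only [β]
    linear_combination (- e1 a b c) - e1 b c a + e1 b a c + hx - hy
  · intro a b c
    have h1 : C 2 a (b * c) = C 2 a (c * b) := by rw [mul_comm]
    have h2 : C 2 b (c * a) = C 2 b (a * c) := by rw [mul_comm]
    have h3 : C 2 c (a * b) = C 2 c (b * a) := by rw [mul_comm]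
    have h4 : C 2 (a * b) c = C 2 (b * a) c := by rw [mul_comm]
    have h5 : C 2 (a * c) b = C 2 (c * a) b := by rw [mul_comm]
    have h6 : C 2 (b * c) a = C 2 (c * b) a := by rw [mul_comm]
    simp only [β, map_sub, LinearMap.sub_apply]
    linear_combination -(e2 a b c) + e2 a c b - e2 b c a + e2 b a c - e2 c a b + e2 c b a
      - h1 - h2 - h3 + h4 - h5 + h6
end

section
/- Let k be a commutative ring, A a unital k-algebra, and (C_r)_{r≥0} a formal associative deformation of A. Then every idempotent of A lifts to the deformed algebra: for every e₀ ∈ A with e₀·e₀ = e₀ there exists a sequence e : ℕ → A with e(0) = e₀ which is an idempotent for the deformed product, i.e. for every n ≥ 0, ∑_{i+j+l=n} C_i(e(j), e(l)) = e(n). -/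
open Finset

variable {k : Type*} [CommRing k] {A : Type*} [Ring A] [Algebra k A]

/-- The deformed (star) product of two formal series `a, b : ℕ → A`, with respect to a
formal deformation `(C_r)`:  `(a ⋆ b)(n) = ∑_{i+j+l=n} C_i(a(j), b(l))`. -/
def starMul (C : ℕ → A →ₗ[k] A →ₗ[k] A) (a b : ℕ → A) : ℕ → A :=
  fun n => ∑ p ∈ antidiagonal n, ∑ q ∈ antidiagonal p.2, C p.1 (a q.1) (b q.2)

/-!
Newton's method, one power of `ħ` at a time. Let `f` be idempotent for `⋆` up to order `N` with
`f 0 = e₀`, and let `X = (f ⋆ f - f)(N + 1)` be the defect in the next order. Comparing the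
coefficients of `ħ^(N+1)` in `(f ⋆ f) ⋆ f = f ⋆ (f ⋆ f)` shows that `X` commutes with `e₀`, and then
`X + (1 - 2e₀) X e₀ + e₀ (1 - 2e₀) X = (1 - 2e₀) X`, so adding `ħ^(N+1) (1 - 2e₀) X` to `f` makes
it idempotent up to order `N + 1` without changing the lower coefficients.
-/

section Reindex

/- Both nested sums in `starMul_assoc` run over `i + j + u + v + w = n` (`C`-degrees `i, j`,
argument degrees `u, v, w`); these lemmas bring them to a common order whose innermost sum runs
over `(i, j)` with `i + j` fixed, where the associativity condition applies. -/

variable {M : Type*} [AddCommMonoid M]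

theorem sum_antidiagonal_nested_left (G : ℕ → ℕ → ℕ → ℕ → ℕ → M) (n : ℕ) :
    ∑ p ∈ antidiagonal n, ∑ q ∈ antidiagonal p.2, ∑ r ∈ antidiagonal q.1, ∑ s ∈ antidiagonal r.2,
        G p.1 r.1 s.1 s.2 q.2 =
      ∑ P ∈ antidiagonal n, ∑ Q ∈ antidiagonal P.2, ∑ R ∈ antidiagonal Q.2,
        ∑ m ∈ antidiagonal P.1, G m.1 m.2 Q.1 R.1 R.2 := by
  simp only [sum_sigma']
  apply sum_nbij'
    (fun ⟨(i, _), (_, w), (j, _), (u, v)⟩ ↦ ⟨(i + j, u + v + w), (u, v + w), (v, w), (i, j)⟩)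
    (fun ⟨_, (u, _), (v, w), (i, j)⟩ ↦ ⟨(i, j + u + v + w), (j + u + v, w), (j, u + v), (u, v)⟩)
  all_goals
    rintro ⟨⟨_, _⟩, ⟨_, _⟩, ⟨_, _⟩, _, _⟩ h
    simp_all only [mem_sigma, HasAntidiagonal.mem_antidiagonal, Sigma.mk.injEq, Prod.mk.injEq,
      heq_eq_eq, and_true, true_and]
    try omega

theorem sum_antidiagonal_nested_right (G : ℕ → ℕ → ℕ → ℕ → ℕ → M) (n : ℕ) :
    ∑ p ∈ antidiagonal n, ∑ q ∈ antidiagonal p.2, ∑ r ∈ antidiagonal q.2, ∑ s ∈ antidiagonal r.2,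
        G p.1 r.1 q.1 s.1 s.2 =
      ∑ P ∈ antidiagonal n, ∑ Q ∈ antidiagonal P.2, ∑ R ∈ antidiagonal Q.2,
        ∑ m ∈ antidiagonal P.1, G m.1 m.2 Q.1 R.1 R.2 := by
  simp only [sum_sigma']
  apply sum_nbij'
    (fun ⟨(i, _), (u, _), (j, _), (v, w)⟩ ↦ ⟨(i + j, u + v + w), (u, v + w), (v, w), (i, j)⟩)
    (fun ⟨_, (u, _), (v, w), (i, j)⟩ ↦ ⟨(i, u + j + v + w), (u, j + v + w), (j, v + w), (v, w)⟩)
  all_goals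
    rintro ⟨⟨_, _⟩, ⟨_, _⟩, ⟨_, _⟩, _, _⟩ h
    simp_all only [mem_sigma, HasAntidiagonal.mem_antidiagonal, Sigma.mk.injEq, Prod.mk.injEq,
      heq_eq_eq, and_true, true_and]
    try omega

end Reindex

theorem IsIdempotentElem.add_mul_add_mul_one_sub_two_mul {R : Type*} [Ring R] {e x : R}
    (he : IsIdempotentElem e) (hx : Commute x e) :
    x + (1 - 2 * e) * x * e + e * ((1 - 2 * e) * x) = (1 - 2 * e) * x := by
  have hright : (1 - 2 * e) * e = -e := by
    rw [sub_mul, one_mul, mul_assoc, he.eq, two_mul, sub_add_cancel_left]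
  have hleft : e * (1 - 2 * e) = -e := by
    rw [mul_sub, mul_one, ← mul_assoc, (Commute.ofNat_right e 2).eq, mul_assoc, he.eq, two_mul,
      sub_add_cancel_left]
  rw [mul_assoc, hx.eq, ← mul_assoc, hright, ← mul_assoc, hleft, neg_mul, sub_mul, one_mul,
    two_mul, add_mul]
  abel

section StarMul

variable (C : ℕ → A →ₗ[k] A →ₗ[k] A)

def IsAssociativeDeformation : Prop :=
  ∀ (n : ℕ) (a b c : A),
    ∑ p ∈ antidiagonal n, C p.1 (C p.2 a b) c = ∑ p ∈ antidiagonal n, C p.1 a (C p.2 b c)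

theorem starMul_add_left (a a' b : ℕ → A) :
    starMul C (a + a') b = starMul C a b + starMul C a' b := by
  ext n
  simp only [starMul, Pi.add_apply, map_add, LinearMap.add_apply, sum_add_distrib]

theorem starMul_add_right (a b b' : ℕ → A) :
    starMul C a (b + b') = starMul C a b + starMul C a b' := by
  ext n
  simp only [starMul, Pi.add_apply, map_add, sum_add_distrib]

theorem starMul_congr {a a' b b' : ℕ → A} {n : ℕ} (ha : ∀ m ≤ n, a m = a' m)
    (hb : ∀ m ≤ n, b m = b' m) : starMul C a b n = starMul C a' b' n := by
  refine sum_congr rfl fun p hp ↦ sum_congr rfl fun q hq ↦ ?_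
  rw [HasAntidiagonal.mem_antidiagonal] at hp hq
  rw [ha q.1 (by omega), hb q.2 (by omega)]

theorem starMul_apply_zero (a b : ℕ → A) : starMul C a b 0 = C 0 (a 0) (b 0) := by
  simp [starMul]

theorem starMul_apply_of_forall_lt_eq_zero_left {a : ℕ → A} {n : ℕ} (ha : ∀ m < n, a m = 0)
    (b : ℕ → A) : starMul C a b n = C 0 (a n) (b 0) := by
  rw [starMul, sum_eq_single_of_mem (0, n) (by simp), sum_eq_single_of_mem (n, 0) (by simp)]
  · rintro q hq hne
    rw [HasAntidiagonal.mem_antidiagonal] at hq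
    rw [ha q.1 (by grind), map_zero, LinearMap.zero_apply]
  · rintro p hp hne
    rw [HasAntidiagonal.mem_antidiagonal] at hp
    refine sum_eq_zero fun q hq ↦ ?_
    rw [HasAntidiagonal.mem_antidiagonal] at hq
    rw [ha q.1 (by grind), map_zero, LinearMap.zero_apply]

theorem starMul_apply_of_forall_lt_eq_zero_right (a : ℕ → A) {b : ℕ → A} {n : ℕ}
    (hb : ∀ m < n, b m = 0) : starMul C a b n = C 0 (a 0) (b n) := by
  rw [starMul, sum_eq_single_of_mem (0, n) (by simp), sum_eq_single_of_mem (0, n) (by simp)]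
  · rintro q hq hne
    rw [HasAntidiagonal.mem_antidiagonal] at hq
    rw [hb q.2 (by grind), map_zero]
  · rintro p hp hne
    rw [HasAntidiagonal.mem_antidiagonal] at hp
    refine sum_eq_zero fun q hq ↦ ?_
    rw [HasAntidiagonal.mem_antidiagonal] at hq
    rw [hb q.2 (by grind), map_zero]

theorem starMul_assoc
    (hassoc : IsAssociativeDeformation C)
    (a b c : ℕ → A) : starMul C (starMul C a b) c = starMul C a (starMul C b c) := by
  ext n
  simp only [starMul, map_sum, LinearMap.sum_apply]
  rw [sum_antidiagonal_nested_left (fun i j u v w ↦ C i (C j (a u) (b v)) (c w)),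
    sum_antidiagonal_nested_right (fun i j u v w ↦ C i (a u) (C j (b v) (c w)))]
  exact sum_congr rfl fun P _ ↦ sum_congr rfl fun Q _ ↦ sum_congr rfl fun R _ ↦
    hassoc P.1 (a Q.1) (b R.1) (c R.2)

def idempotentDefect (f : ℕ → A) (N : ℕ) : A :=
  starMul C f f (N + 1) - f (N + 1)

theorem commute_idempotentDefect (hC0 : ∀ a b : A, C 0 a b = a * b)
    (hassoc : IsAssociativeDeformation C) {f : ℕ → A} {N : ℕ}
    (hf : ∀ m ≤ N, starMul C f f m = f m) : Commute (idempotentDefect C f N) (f 0) := by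
  have hlow : ∀ m < N + 1, (starMul C f f - f) m = 0 :=
    fun m hm ↦ sub_eq_zero.2 (hf m (by omega))
  have hassocN := congrFun (starMul_assoc C hassoc f f f) (N + 1)
  -- split the inner `f ⋆ f` as `f + (f ⋆ f - f)`; the second summand only meets `f 0`
  rw [← add_sub_cancel f (starMul C f f), starMul_add_left, starMul_add_right, Pi.add_apply,
    Pi.add_apply, starMul_apply_of_forall_lt_eq_zero_left C hlow,
    starMul_apply_of_forall_lt_eq_zero_right C f hlow, hC0, hC0] at hassocN
  exact add_left_cancel hassocN

def idempotentCorrection (f : ℕ → A) (N : ℕ) : ℕ → A :=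
  f + Pi.single (N + 1) ((1 - 2 * f 0) * idempotentDefect C f N)

theorem idempotentCorrection_apply_of_le (f : ℕ → A) {N m : ℕ} (hm : m ≤ N) :
    idempotentCorrection C f N m = f m := by
  rw [idempotentCorrection, Pi.add_apply, Pi.single_eq_of_ne (by omega), add_zero]

theorem starMul_idempotentCorrection (hC0 : ∀ a b : A, C 0 a b = a * b)
    (hassoc : IsAssociativeDeformation C)
    {f : ℕ → A} {N : ℕ} (he : IsIdempotentElem (f 0)) (hf : ∀ m ≤ N, starMul C f f m = f m) :
    ∀ m ≤ N + 1, starMul C (idempotentCorrection C f N) (idempotentCorrection C f N) m =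
      idempotentCorrection C f N m := by
  intro m hm
  obtain hm | rfl := hm.lt_or_eq
  · have hlow : ∀ l ≤ m, idempotentCorrection C f N l = f l :=
      fun l hl ↦ idempotentCorrection_apply_of_le C f (by omega)
    rw [starMul_congr C hlow hlow, hf m (by omega), hlow m le_rfl]
  · have hcomm := commute_idempotentDefect C hC0 hassoc hf
    rw [idempotentCorrection, starMul_add_left, starMul_add_right, starMul_add_right]
    set y := (1 - 2 * f 0) * idempotentDefect C f N
    have hs : ∀ l < N + 1, (Pi.single (N + 1) y : ℕ → A) l = 0 :=
      fun l hl ↦ Pi.single_eq_of_ne hl.ne _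
    simp only [Pi.add_apply, starMul_apply_of_forall_lt_eq_zero_left C hs,
      starMul_apply_of_forall_lt_eq_zero_right C f hs, hC0, Pi.single_eq_same, hs 0 N.succ_pos,
      mul_zero, add_zero]
    have hdefect : starMul C f f (N + 1) - f (N + 1) + y * f 0 + f 0 * y = y :=
      he.add_mul_add_mul_one_sub_two_mul hcomm
    calc starMul C f f (N + 1) + f 0 * y + y * f 0
        = f (N + 1) + (starMul C f f (N + 1) - f (N + 1) + y * f 0 + f 0 * y) := by abel
      _ = f (N + 1) + y := by rw [hdefect]

def idempotentLift (e₀ : A) : ℕ → ℕ → A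
  | 0 => fun _ ↦ e₀
  | N + 1 => idempotentCorrection C (idempotentLift e₀ N) N

theorem idempotentLift_apply_of_le (e₀ : A) {m N : ℕ} (h : m ≤ N) :
    idempotentLift C e₀ N m = idempotentLift C e₀ m m := by
  induction N, h using Nat.le_induction with
  | base => rfl
  | succ N hmN ih => rw [idempotentLift, idempotentCorrection_apply_of_le C _ hmN, ih]

theorem starMul_idempotentLift (hC0 : ∀ a b : A, C 0 a b = a * b)
    (hassoc : IsAssociativeDeformation C)
    {e₀ : A} (he : IsIdempotentElem e₀) (N : ℕ) :
    ∀ m ≤ N, starMul C (idempotentLift C e₀ N) (idempotentLift C e₀ N) m =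
      idempotentLift C e₀ N m := by
  induction N with
  | zero =>
    rintro m hm
    rw [Nat.le_zero.1 hm, starMul_apply_zero, hC0]
    exact he.eq
  | succ N ih =>
    have he' : IsIdempotentElem (idempotentLift C e₀ N 0) := by
      rwa [idempotentLift_apply_of_le C e₀ N.zero_le]
    exact starMul_idempotentCorrection C hC0 hassoc he' ih

end StarMul

/-- For a formal associative deformation `(C_r)` of a unital
`k`-algebra `A`, every idempotent `e₀` of `A` lifts to an idempotent of the deformed
algebra: there is a sequence `e : ℕ → A` with `e(0) = e₀` and `e ⋆ e = e`. -/
theorem idempotent_lifts_in_formal_deformation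
    (C : ℕ → A →ₗ[k] A →ₗ[k] A)
    (hC0 : ∀ a b : A, C 0 a b = a * b)
    (hassoc : ∀ (n : ℕ) (a b c : A),
      ∑ p ∈ antidiagonal n, C p.1 (C p.2 a b) c =
      ∑ p ∈ antidiagonal n, C p.1 a (C p.2 b c)) :
    ∀ e₀ : A, e₀ * e₀ = e₀ →
      ∃ e : ℕ → A, e 0 = e₀ ∧ ∀ n : ℕ, starMul C e e n = e n := by
  intro e₀ he
  refine ⟨fun n ↦ idempotentLift C e₀ n n, rfl, fun n ↦ ?_⟩
  have hdiag : ∀ m ≤ n, idempotentLift C e₀ m m = idempotentLift C e₀ n m :=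
    fun m hm ↦ (idempotentLift_apply_of_le C e₀ hm).symm
  rw [starMul_congr C hdiag hdiag]
  exact starMul_idempotentLift C hC0 hassoc he n n le_rfl
end

section
/- Let R be a unital ring (not necessarily commutative) and let p, b, b' ∈ R. Assume that 1 + b·p is invertible, set q := p·(1 + b·p)⁻¹, and assume that 1 + b'·q is invertible. Then 1 + (b + b')·p is invertible and q·(1 + b'·q)⁻¹ = p·(1 + (b + b')·p)⁻¹. (This is the composition law τ_{b'} ∘ τ_b = τ_{b+b'} for the gauge transformation τ_b(p) = p·(1 + b·p)⁻¹, showing that gauge transformations define an action of the additive group.) -/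
/-- composition law for gauge transformations `τ_b(p) = p·(1+b·p)⁻¹`.
In a unital ring `R`, if `1 + b·p` is invertible, `q := p·(1+b·p)⁻¹`, and `1 + b'·q` is
invertible, then `1 + (b+b')·p` is invertible and
`q·(1+b'·q)⁻¹ = p·(1+(b+b')·p)⁻¹`, i.e. `τ_{b'} ∘ τ_b = τ_{b+b'}`. -/
theorem gauge_transformation_composition {R : Type*} [Ring R] (p b b' : R)
    (h : IsUnit (1 + b * p)) (h' : IsUnit (1 + b' * (p * Ring.inverse (1 + b * p)))) :
    IsUnit (1 + (b + b') * p) ∧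
      (p * Ring.inverse (1 + b * p)) *
          Ring.inverse (1 + b' * (p * Ring.inverse (1 + b * p))) =
        p * Ring.inverse (1 + (b + b') * p) := by
  set u : R := 1 + b * p with hu
  set q : R := p * Ring.inverse u with hq
  have key : (1 + b' * q) * u = 1 + (b + b') * p := by
    have : b' * q * u = b' * p := by
      rw [hq, mul_assoc, mul_assoc, Ring.inverse_mul_cancel _ h, mul_one]
    rw [add_mul, one_mul, this, hu]
    noncomm_ring
  have hv : IsUnit (1 + (b + b') * p) := key ▸ h'.mul h
  refine ⟨hv, hv.mul_right_cancel ?_⟩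
  rw [mul_assoc p (Ring.inverse (1 + (b + b') * p)), Ring.inverse_mul_cancel _ hv, mul_one, ← key, ← mul_assoc, mul_assoc q,
    Ring.inverse_mul_cancel _ h', mul_one, hq, mul_assoc, Ring.inverse_mul_cancel _ h, mul_one]
end
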